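/- For all countable ordinals α ≥ 1 and all positive integers k, R(ω^(1+α), k+1) ≤ ω^(1+α·k): that is, ω^(1+α·k) → (ω^(1+α), k+1)². -/

import Mathlib

open Ordinal Set

noncomputable section

instance : TopologicalSpace Ordinal := Preorder.topology Ordinal
instance : OrderTopology Ordinal := ⟨rfl⟩

/-- `X` is order-isomorphic to the ordinal `a`. -/
def IsOrderCopy (X : Set Ordinal) (a : Ordinal) : Prop :=
  Nonempty (X ≃o (Iio a))

/-- `X` is order-isomorphic to the ordinal `a` and closed in its supremum. -/
def IsClosedCopy (X : Set Ordinal) (a : Ordinal) : Prop :=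
  IsOrderCopy X a ∧ ∀ S ⊆ X, S.Nonempty → sSup S < sSup X → sSup S ∈ X

/-- `X` is homeomorphic to the ordinal `a` with its order topology. -/
def IsTopCopy (X : Set Ordinal) (a : Ordinal) : Prop :=
  Nonempty (X ≃ₜ (Iio a))

/-- `X` is homogeneous for color `b` (red = `true`, blue = `false`):
every pair from `X` gets color `b`. -/
def Homog (c : Ordinal → Ordinal → Bool) (b : Bool) (X : Set Ordinal) : Prop :=
  ∀ x ∈ X, ∀ y ∈ X, x < y → c x y = b

/-- There is a blue-homogeneous set of `m` points inside `β`. -/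
def BlueSet (c : Ordinal → Ordinal → Bool) (β : Ordinal) (m : ℕ) : Prop :=
  ∃ H : Finset Ordinal, (H : Set Ordinal) ⊆ Iio β ∧ H.card = m ∧ Homog c false (H : Set Ordinal)

/-- The closed partition relation `β →_cl (a, m)²`. -/
def ToClosed2 (β a : Ordinal) (m : ℕ) : Prop :=
  ∀ c : Ordinal → Ordinal → Bool,
    (∃ X ⊆ Iio β, IsClosedCopy X a ∧ Homog c true X) ∨ BlueSet c β m

/-- The topological partition relation `β →_top (a, m)²`. -/
def ToTop2 (β a : Ordinal) (m : ℕ) : Prop :=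
  ∀ c : Ordinal → Ordinal → Bool,
    (∃ X ⊆ Iio β, IsTopCopy X a ∧ Homog c true X) ∨ BlueSet c β m

/-- The classical partition relation `β → (a, m)²`. -/
def ToPlain2 (β a : Ordinal) (m : ℕ) : Prop :=
  ∀ c : Ordinal → Ordinal → Bool,
    (∃ X ⊆ Iio β, IsOrderCopy X a ∧ Homog c true X) ∨ BlueSet c β m

/-- The closed pigeonhole relation `β →_cl (a)¹_k`. -/
def ToClosed1 (β a : Ordinal) (k : ℕ) : Prop :=
  ∀ c : Ordinal → Fin k, ∃ i, ∃ X ⊆ Iio β, (∀ x ∈ X, c x = i) ∧ IsClosedCopy X a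

/-- The topological pigeonhole relation `β →_top (a)¹_k`. -/
def ToTop1 (β a : Ordinal) (k : ℕ) : Prop :=
  ∀ c : Ordinal → Fin k, ∃ i, ∃ X ⊆ Iio β, (∀ x ∈ X, c x = i) ∧ IsTopCopy X a

/-- The classical pigeonhole relation `β → (a)¹_k`. -/
def ToPlain1 (β a : Ordinal) (k : ℕ) : Prop :=
  ∀ c : Ordinal → Fin k, ∃ i, ∃ X ⊆ Iio β, (∀ x ∈ X, c x = i) ∧ IsOrderCopy X a

/-- The closed ordinal Ramsey number `R^cl(a, m)`. -/
def Rcl (a : Ordinal) (m : ℕ) : Ordinal := sInf {β | ToClosed2 β a m}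

/-- The topological ordinal Ramsey number `R^top(a, m)`. -/
def Rtop (a : Ordinal) (m : ℕ) : Ordinal := sInf {β | ToTop2 β a m}

/-- The classical pigeonhole number `P(a)_k`. -/
def Pplain (a : Ordinal) (k : ℕ) : Ordinal := sInf {β | ToPlain1 β a k}

/-- The closed pigeonhole number `P^cl(a)_k`. -/
def PclK (a : Ordinal) (k : ℕ) : Ordinal := sInf {β | ToClosed1 β a k}

/-!
The theorem follows by induction on `k` from the weak Erdős–Milner step
`ω ^ A → (ω * δ, m)² ⟹ ω ^ A * δ → (ω * δ, m + 1)²` for countable `δ`, taken with `δ = ω ^ a`.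

Suppose a colouring of `ω ^ A * δ` has neither a red copy of `ω * δ` nor a blue `(m + 1)`-set.
The ordinal `ω ^ A` is indecomposable: if a copy of it is split in two, one part contains a copy,
because the natural sum of two ordinals below `ω ^ A` stays below `ω ^ A`. Hence inside a copy of
`ω ^ A` the red neighbourhood of any point again contains a copy of `ω ^ A`, since a copy in the
blue neighbourhood would contain a blue `m`-set. Enumerate the `δ` blocks of length `ω ^ A` by `ℕ`
and dovetail: at each step take the least point of the current set of one block and shrink every
set to the red neighbourhood of that point. The chosen points are pairwise red and form an
increasing `ω`-sequence in every block, hence a red copy of `ω * δ`.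
-/

namespace Ordinal

def nadd (a b : Ordinal.{u}) : Ordinal.{u} :=
  max (⨆ x : Iio a, Order.succ (nadd x.1 b)) (⨆ y : Iio b, Order.succ (nadd a y.1))
termination_by (a, b)
decreasing_by
  · exact Prod.Lex.left _ _ x.2
  · exact Prod.Lex.right _ y.2

infixl:65 " ♯ " => Ordinal.nadd

theorem nadd_le_iff {a b c : Ordinal} :
    a ♯ b ≤ c ↔ (∀ a' < a, a' ♯ b < c) ∧ ∀ b' < b, a ♯ b' < c := by
  rw [nadd, max_le_iff, Ordinal.iSup_le_iff, Ordinal.iSup_le_iff]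
  simp only [Order.succ_le_iff, Subtype.forall, mem_Iio]

theorem nadd_lt_nadd_right {a b : Ordinal} (h : a < b) (c : Ordinal) : a ♯ c < b ♯ c :=
  (nadd_le_iff.1 le_rfl).1 a h

theorem nadd_lt_nadd_left {a b : Ordinal} (h : a < b) (c : Ordinal) : c ♯ a < c ♯ b :=
  (nadd_le_iff.1 le_rfl).2 a h

theorem nadd_le_of_strictMonoOn {b : Ordinal} {f : Ordinal → Ordinal → Ordinal}
    (hl : ∀ y < b, StrictMonoOn (f · y) (Iio b)) (hr : ∀ x < b, StrictMonoOn (f x) (Iio b)) :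
    ∀ x < b, ∀ y < b, x ♯ y ≤ f x y := by
  intro x
  induction x using WellFoundedLT.induction with
  | ind x IHx =>
  intro hx y
  induction y using WellFoundedLT.induction with
  | ind y IHy =>
  intro hy
  refine nadd_le_iff.2 ⟨fun x' hx' => ?_, fun y' hy' => ?_⟩
  · exact (IHx x' hx' (hx'.trans hx) y hy).trans_lt (hl y hy (hx'.trans hx) hx hx')
  · exact (IHy y' hy' (hy'.trans hy)).trans_lt (hr x hx (hy'.trans hy) hy hy')

theorem zero_nadd_zero : (0 : Ordinal) ♯ 0 = 0 :=
  nonpos_iff_eq_zero.1 <|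
    nadd_le_iff.2 ⟨fun _ h => absurd h not_lt_zero, fun _ h => absurd h not_lt_zero⟩

theorem add_lt_add_right_of_lt_omega0 {a b c : Ordinal} (h : a < b) (hb : b < ω) (hc : c < ω) :
    a + c < b + c := by
  obtain ⟨m, rfl⟩ := lt_omega0.1 (h.trans hb)
  obtain ⟨n, rfl⟩ := lt_omega0.1 hb
  obtain ⟨k, rfl⟩ := lt_omega0.1 hc
  norm_cast at h ⊢
  omega

theorem div_opow_lt_omega0 {d z : Ordinal} (h : z < ω ^ (d + 1)) : z / ω ^ d < ω :=
  (lt_mul_iff_div_lt (opow_ne_zero d omega0_ne_zero)).1 (by rwa [← opow_add_one])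

theorem mod_lt_mod_of_div_eq {x x' c : Ordinal} (h : x' < x) (hdiv : x' / c = x / c) :
    x' % c < x % c := by
  rw [← div_add_mod x' c, ← div_add_mod x c, hdiv] at h
  exact (add_lt_add_iff_left _).1 h

theorem nadd_le_of_lt_opow_add_one {d : Ordinal} (hd : IsPrincipal (· ♯ ·) (ω ^ d))
    {x y : Ordinal} (hx : x < ω ^ (d + 1)) (hy : y < ω ^ (d + 1)) :
    x ♯ y ≤ ω ^ d * (x / ω ^ d + y / ω ^ d) + (x % ω ^ d ♯ y % ω ^ d) := by
  have hc : ω ^ d ≠ 0 := opow_ne_zero d omega0_ne_zero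
  have hrem : ∀ z z', z % ω ^ d ♯ z' % ω ^ d < ω ^ d := fun z z' =>
    hd (mod_lt z hc) (mod_lt z' hc)
  refine nadd_le_of_strictMonoOn
    (f := fun x y => ω ^ d * (x / ω ^ d + y / ω ^ d) + (x % ω ^ d ♯ y % ω ^ d))
    (fun y hy x' hx' x hx hlt => ?_)
    (fun x hx y' hy' y hy hlt => ?_) x hx y hy
  · rcases (div_le_left hlt.le (ω ^ d)).lt_or_eq with hq | hq
    · refine (opow_mul_add_lt_opow_mul (hrem x' y) ?_).trans_le le_self_add
      exact add_lt_add_right_of_lt_omega0 hq (div_opow_lt_omega0 hx) (div_opow_lt_omega0 hy)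
    · dsimp only
      rw [hq]
      exact add_lt_add_right (nadd_lt_nadd_right (mod_lt_mod_of_div_eq hlt hq) _) _
  · rcases (div_le_left hlt.le (ω ^ d)).lt_or_eq with hr | hr
    · exact (opow_mul_add_lt_opow_mul (hrem x y') (add_lt_add_right hr _)).trans_le le_self_add
    · dsimp only
      rw [hr]
      exact add_lt_add_right (nadd_lt_nadd_left (mod_lt_mod_of_div_eq hlt hr) _) _

theorem isPrincipal_nadd_omega0_opow (e : Ordinal) : IsPrincipal (· ♯ ·) (ω ^ e) := by
  induction e using Ordinal.limitRecOn with
  | zero =>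
    intro x y hx hy
    rw [opow_zero, Order.lt_one_iff] at hx hy
    simp [hx, hy, zero_nadd_zero]
  | add_one d IH =>
    intro x y hx hy
    have hc : ω ^ d ≠ 0 := opow_ne_zero d omega0_ne_zero
    calc x ♯ y ≤ ω ^ d * (x / ω ^ d + y / ω ^ d) + (x % ω ^ d ♯ y % ω ^ d) :=
          nadd_le_of_lt_opow_add_one IH hx hy
      _ < ω ^ (d + 1) := opow_mul_add_lt_opow
          (isPrincipal_add_omega0 (div_opow_lt_omega0 hx) (div_opow_lt_omega0 hy))
          (IH (mod_lt x hc) (mod_lt y hc)) (lt_add_one d)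
  | limit e he IH =>
    intro x y hx hy
    obtain ⟨d₁, hd₁, hx⟩ := (lt_opow_of_isSuccLimit omega0_ne_zero he).1 hx
    obtain ⟨d₂, hd₂, hy⟩ := (lt_opow_of_isSuccLimit omega0_ne_zero he).1 hy
    have hmono {d d' : Ordinal} (h : d ≤ d') : ω ^ d ≤ ω ^ d' := opow_le_opow_right omega0_pos h
    exact (IH _ (max_lt hd₁ hd₂) (hx.trans_le (hmono (le_max_left _ _)))
      (hy.trans_le (hmono (le_max_right _ _)))).trans_le (hmono (max_lt hd₁ hd₂).le)

end Ordinal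

def ContainsCopy (S : Set Ordinal) (τ : Ordinal) : Prop :=
  ∃ f : Ordinal → Ordinal, StrictMonoOn f (Iio τ) ∧ MapsTo f (Iio τ) S

theorem ContainsCopy.mono {S T : Set Ordinal} {τ : Ordinal} (h : ContainsCopy S τ)
    (hST : S ⊆ T) : ContainsCopy T τ :=
  let ⟨f, hf, hfS⟩ := h
  ⟨f, hf, hfS.mono_right hST⟩

theorem ContainsCopy.image {S s : Set Ordinal} {τ : Ordinal} {f : Ordinal → Ordinal}
    (h : ContainsCopy S τ) (hS : S ⊆ s) (hf : StrictMonoOn f s) : ContainsCopy (f '' S) τ :=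
  let ⟨g, hg, hgS⟩ := h
  ⟨f ∘ g, fun _ hi _ hj hij => hf (hS (hgS hi)) (hS (hgS hj)) (hg hi hj hij),
    fun _ hi => mem_image_of_mem f (hgS hi)⟩

theorem ContainsCopy.nonempty {S : Set Ordinal} {τ : Ordinal} (h : ContainsCopy S τ)
    (hτ : τ ≠ 0) : S.Nonempty :=
  let ⟨_, _, hfS⟩ := h
  ⟨_, hfS (mem_Iio.2 (pos_iff_ne_zero.2 hτ))⟩

theorem containsCopy_Ico (l τ : Ordinal) : ContainsCopy (Ico l (l + τ)) τ :=
  ⟨(l + ·), fun _ _ _ _ h => add_lt_add_right h l,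
    fun _ hi => ⟨le_self_add, add_lt_add_right hi l⟩⟩

theorem not_containsCopy_singleton {τ : Ordinal} (hτ : 1 < τ) (x : Ordinal) :
    ¬ ContainsCopy {x} τ := by
  rintro ⟨f, hf, hfx⟩
  have h01 := hf (zero_lt_one.trans hτ) hτ zero_lt_one
  rw [hfx (zero_lt_one.trans hτ), hfx hτ] at h01
  exact h01.false

theorem exists_lt_subset_image_of_not_containsCopy {P : Set Ordinal} {τ : Ordinal}
    (h : ¬ ContainsCopy P τ) :
    ∃ i < τ, ∃ b : Ordinal → Ordinal, StrictMonoOn b (Iio i) ∧ P ∩ Iio τ ⊆ b '' Iio i := by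
  set s := P ∩ Iio τ ∪ Ici τ
  have hs : ¬ BddAbove s := fun hb => not_bddAbove_Ici τ (hb.mono subset_union_right)
  obtain ⟨i, hi, hτi⟩ : ∃ i < τ, τ ≤ enumOrd s i := by
    by_contra! hlt
    refine h ⟨enumOrd s, (enumOrd_strictMono hs).strictMonoOn _, fun j hj => ?_⟩
    rcases enumOrd_mem hs j with hP | hge
    · exact hP.1
    · exact absurd (hlt j hj) (not_lt.2 hge)
  refine ⟨i, hi, enumOrd s, (enumOrd_strictMono hs).strictMonoOn _, fun p hp => ?_⟩
  obtain ⟨j, rfl⟩ := enumOrd_surjective hs (Or.inl hp : p ∈ s)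
  refine ⟨j, ?_, rfl⟩
  by_contra! hij
  exact (hτi.trans ((enumOrd_strictMono hs).monotone (not_lt.1 hij))).not_gt hp.2

theorem Iio_subset_image_union_of_lt {F G : Ordinal → Ordinal} {p q z j : Ordinal}
    (hF : StrictMonoOn F (Iio p)) (hz : Iio z ⊆ F '' Iio p ∪ G '' Iio q) (hj : j < p)
    (hFj : F j < z) : Iio (F j) ⊆ F '' Iio j ∪ G '' Iio q := by
  intro w hw
  rcases hz (lt_trans hw hFj) with ⟨j', hj', rfl⟩ | hG
  · exact Or.inl ⟨j', (hF.lt_iff_lt hj' hj).1 hw, rfl⟩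
  · exact Or.inr hG

theorem le_nadd_of_Iio_subset_image_union {F G : Ordinal → Ordinal} {p q z : Ordinal}
    (hF : StrictMonoOn F (Iio p)) (hG : StrictMonoOn G (Iio q))
    (hz : Iio z ⊆ F '' Iio p ∪ G '' Iio q) : z ≤ p ♯ q := by
  induction p using WellFoundedLT.induction generalizing q z with
  | ind p IHp =>
  induction q using WellFoundedLT.induction generalizing z with
  | ind q IHq =>
  refine le_of_forall_lt fun w hw => ?_
  rcases hz hw with ⟨j, hj, rfl⟩ | ⟨l, hl, rfl⟩
  · refine (IHp j hj (hF.mono (Iio_subset_Iio hj.le)) hG ?_).trans_lt (nadd_lt_nadd_right hj q)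
    exact Iio_subset_image_union_of_lt hF hz hj hw
  · refine (IHq l hl (hG.mono (Iio_subset_Iio hl.le)) ?_).trans_lt (nadd_lt_nadd_left hl p)
    rw [union_comm] at hz ⊢
    exact Iio_subset_image_union_of_lt hG hz hl hw

theorem containsCopy_or_of_Iio_subset_union {e : Ordinal} {P Q : Set Ordinal}
    (h : Iio (ω ^ e) ⊆ P ∪ Q) : ContainsCopy P (ω ^ e) ∨ ContainsCopy Q (ω ^ e) := by
  by_contra! hPQ
  obtain ⟨i, hi, F, hF, hPF⟩ := exists_lt_subset_image_of_not_containsCopy hPQ.1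
  obtain ⟨j, hj, G, hG, hQG⟩ := exists_lt_subset_image_of_not_containsCopy hPQ.2
  have hcover : Iio (ω ^ e) ⊆ F '' Iio i ∪ G '' Iio j := fun w hw =>
    (h hw).imp (fun hP => hPF ⟨hP, hw⟩) (fun hQ => hQG ⟨hQ, hw⟩)
  exact (le_nadd_of_Iio_subset_image_union hF hG hcover).not_gt
    (isPrincipal_nadd_omega0_opow e hi hj)

theorem ContainsCopy.inter_or_inter {e : Ordinal} {S P Q : Set Ordinal}
    (h : ContainsCopy S (ω ^ e)) (hS : S ⊆ P ∪ Q) :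
    ContainsCopy (S ∩ P) (ω ^ e) ∨ ContainsCopy (S ∩ Q) (ω ^ e) := by
  obtain ⟨f, hf, hfS⟩ := h
  have hsplit : Iio (ω ^ e) ⊆ Iio (ω ^ e) ∩ f ⁻¹' P ∪ Iio (ω ^ e) ∩ f ⁻¹' Q := fun i hi =>
    (hS (hfS hi)).imp (fun hP => ⟨hi, hP⟩) (fun hQ => ⟨hi, hQ⟩)
  have himage {R : Set Ordinal} (hR : ContainsCopy (Iio (ω ^ e) ∩ f ⁻¹' R) (ω ^ e)) :
      ContainsCopy (S ∩ R) (ω ^ e) := by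
    refine (hR.image inter_subset_left hf).mono ?_
    rintro _ ⟨i, ⟨hi, hiR⟩, rfl⟩
    exact ⟨hfS hi, hiR⟩
  exact (containsCopy_or_of_Iio_subset_union hsplit).imp himage himage

theorem ContainsCopy.inter_compl_singleton {e : Ordinal} {S : Set Ordinal}
    (h : ContainsCopy S (ω ^ e)) (he : e ≠ 0) (x : Ordinal) : ContainsCopy (S ∩ {x}ᶜ) (ω ^ e) := by
  have hlt : 1 < ω ^ e := one_lt_omega0.trans_le (left_le_opow _ (pos_iff_ne_zero.2 he))
  refine (h.inter_or_inter (P := {x}ᶜ) (Q := {x}) fun y _ => em' (y = x)).resolve_right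
    fun hx => not_containsCopy_singleton hlt x (hx.mono inter_subset_right)

theorem ContainsCopy.exists_isOrderCopy {S : Set Ordinal} {τ : Ordinal} (h : ContainsCopy S τ) :
    ∃ X ⊆ S, IsOrderCopy X τ :=
  let ⟨f, hf, hfS⟩ := h
  ⟨f '' Iio τ, hfS.image_subset, ⟨(hf.orderIso f _).symm⟩⟩

theorem toNat_card_lt_toNat_card {a b : Ordinal} (h : a < b) (hb : b < ω) :
    Cardinal.toNat a.card < Cardinal.toNat b.card := by
  obtain ⟨m, rfl⟩ := lt_omega0.1 (h.trans hb)
  obtain ⟨n, rfl⟩ := lt_omega0.1 hb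
  simpa using h

theorem lt_of_mem_Ico_mul {b ν ν' y z : Ordinal} (h : ν < ν') (hy : y ∈ Ico (b * ν) (b * ν + b))
    (hz : b * ν' ≤ z) : y < z :=
  calc y < b * ν + b := hy.2
    _ = b * (ν + 1) := (mul_add_one b ν).symm
    _ ≤ b * ν' := mul_le_mul_right (Order.add_one_le_of_lt h) b
    _ ≤ z := hz

theorem containsCopy_omega0_mul {b δ : Ordinal} {E : ℕ → Ordinal} (hE : range E = Iio δ)
    {x : ℕ → Ordinal} (hmono : ∀ s, StrictMono fun n => x (Nat.pair s n))
    (hblock : ∀ t, x t ∈ Ico (b * E t.unpair.1) (b * E t.unpair.1 + b)) :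
    ContainsCopy (range x ∩ Iio (b * δ)) (ω * δ) := by
  -- `ι = ω * ν + n` goes to the `n`-th point of the sequence in block `ν`; for finite `o`,
  -- `Cardinal.toNat o.card` is `o` as a natural number.
  set g : Ordinal → Ordinal := fun ι =>
    x (Nat.pair (Function.invFun E (ι / ω)) (Cardinal.toNat (ι % ω).card))
  have hdiv : ∀ ι < ω * δ, ι / ω < δ := fun ι hι => (lt_mul_iff_div_lt omega0_ne_zero).1 hι
  have hg : ∀ ι < ω * δ, g ι ∈ Ico (b * (ι / ω)) (b * (ι / ω) + b) := fun ι hι => by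
    have hE' := Function.invFun_eq (f := E) (hE.symm ▸ hdiv ι hι : ι / ω ∈ range E)
    simpa only [g, Nat.unpair_pair, hE'] using hblock (Nat.pair (Function.invFun E (ι / ω)) _)
  refine ⟨g, fun ι hι κ hκ hlt => ?_, fun ι hι => ⟨mem_range_self _, ?_⟩⟩
  · rcases (div_le_left hlt.le ω).lt_or_eq with hq | hq
    · exact lt_of_mem_Ico_mul hq (hg ι hι) (hg κ hκ).1
    · simp only [g, hq]
      exact hmono _ (toNat_card_lt_toNat_card (mod_lt_mod_of_div_eq hlt hq)
        (mod_lt κ omega0_ne_zero))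
  · exact lt_of_mem_Ico_mul (hdiv ι hι) (hg ι hι) le_rfl

theorem Homog.mono {c : Ordinal → Ordinal → Bool} {b : Bool} {X Y : Set Ordinal}
    (h : Homog c b Y) (hXY : X ⊆ Y) : Homog c b X :=
  fun x hx y hy => h x (hXY hx) y (hXY hy)

theorem Homog.image {c : Ordinal → Ordinal → Bool} {b : Bool} {f : Ordinal → Ordinal}
    {s X : Set Ordinal} (h : Homog (fun i j => c (f i) (f j)) b X) (hf : StrictMonoOn f s)
    (hX : X ⊆ s) : Homog c b (f '' X) := by
  rintro _ ⟨i, hi, rfl⟩ _ ⟨j, hj, rfl⟩ hij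
  exact h i hi j hj ((hf.lt_iff_lt (hX hi) (hX hj)).1 hij)

theorem Homog.insert {c : Ordinal → Ordinal → Bool} {b : Bool} {X : Set Ordinal} {x : Ordinal}
    (h : Homog c b X) (hx : ∀ y ∈ X, c (min x y) (max x y) = b) : Homog c b (insert x X) := by
  rintro u (rfl | hu) v (rfl | hv) huv
  · exact absurd huv (lt_irrefl _)
  · simpa [min_eq_left huv.le, max_eq_right huv.le] using hx v hv
  · simpa [min_eq_right huv.le, max_eq_left huv.le] using hx u hu
  · exact h u hu v hv huv

/-- The partition relation `S → (τ, m)²` for the single colouring `c`. -/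
def Arrows (c : Ordinal → Ordinal → Bool) (S : Set Ordinal) (τ : Ordinal) (m : ℕ) : Prop :=
  (∃ X ⊆ S, IsOrderCopy X τ ∧ Homog c true X) ∨
    ∃ H : Finset Ordinal, ↑H ⊆ S ∧ H.card = m ∧ Homog c false ↑H

theorem ToPlain2.arrows {β τ : Ordinal} {m : ℕ} (h : ToPlain2 β τ m) {S : Set Ordinal}
    (hS : ContainsCopy S β) (c : Ordinal → Ordinal → Bool) : Arrows c S τ m := by
  classical
  obtain ⟨f, hf, hfS⟩ := hS
  rcases h fun i j => c (f i) (f j) with ⟨X, hX, ⟨e⟩, hXc⟩ | ⟨H, hH, hcard, hHc⟩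
  · exact Or.inl ⟨f '' X, (hfS.mono_left hX).image_subset,
      ⟨((hf.mono hX).orderIso f X).symm.trans e⟩, hXc.image hf hX⟩
  · refine Or.inr ⟨H.image f, ?_, ?_, ?_⟩
    · rw [Finset.coe_image]
      exact (hfS.mono_left hH).image_subset
    · rw [Finset.card_image_of_injOn (hf.injOn.mono hH), hcard]
    · rw [Finset.coe_image]
      exact hHc.image hf hH

def colorNbrs (c : Ordinal → Ordinal → Bool) (b : Bool) (x : Ordinal) (S : Set Ordinal) :
    Set Ordinal :=
  {y ∈ S | y ≠ x ∧ c (min x y) (max x y) = b}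

theorem colorNbrs_subset (c : Ordinal → Ordinal → Bool) (b : Bool) (x : Ordinal)
    (S : Set Ordinal) : colorNbrs c b x S ⊆ S :=
  fun _ hy => hy.1

/-- If the red neighbourhood had no copy of `ω ^ A`, by indecomposability the blue one would, and
a blue `m`-set in it would extend by `x` to a blue `(m + 1)`-set in `U`. -/
theorem containsCopy_colorNbrs_true {A τ : Ordinal} {m : ℕ} {c : Ordinal → Ordinal → Bool}
    {U S : Set Ordinal} {x : Ordinal} (hA : A ≠ 0) (h : ToPlain2 (ω ^ A) τ m)
    (hU : ¬ Arrows c U τ (m + 1)) (hx : x ∈ U) (hSU : S ⊆ U) (hS : ContainsCopy S (ω ^ A)) :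
    ContainsCopy (colorNbrs c true x S) (ω ^ A) := by
  have hsplit : S ∩ {x}ᶜ ⊆ colorNbrs c true x S ∪ colorNbrs c false x S := by
    rintro y ⟨hyS, hyx⟩
    cases hc : c (min x y) (max x y)
    · exact Or.inr ⟨hyS, hyx, hc⟩
    · exact Or.inl ⟨hyS, hyx, hc⟩
  rcases (hS.inter_compl_singleton hA x).inter_or_inter hsplit with hT | hF
  · exact hT.mono inter_subset_right
  have hFU : colorNbrs c false x S ⊆ U := (colorNbrs_subset _ _ _ _).trans hSU
  rcases h.arrows (hF.mono inter_subset_right) c with ⟨X, hX, hXc⟩ | ⟨H, hH, hcard, hHc⟩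
  · exact absurd (Or.inl ⟨X, hX.trans hFU, hXc⟩) hU
  · classical
    refine absurd (Or.inr ⟨insert x H, ?_, ?_, ?_⟩) hU
    · rw [Finset.coe_insert]
      exact insert_subset hx (hH.trans hFU)
    · rw [Finset.card_insert_of_notMem fun hxH => (hH hxH).2.1 rfl, hcard]
    · rw [Finset.coe_insert]
      exact hHc.insert fun y hy => (hH hy).2.2

section Dovetail

variable (c : Ordinal → Ordinal → Bool) (B : ℕ → Set Ordinal)

/-- Step `t` serves the index `t.unpair.1`, so every index is served infinitely often. -/
def shrinkSeq : ℕ → ℕ → Set Ordinal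
  | 0 => B
  | t + 1 => fun s => colorNbrs c true (sInf (shrinkSeq t t.unpair.1)) (shrinkSeq t s)

def dovetailPt (t : ℕ) : Ordinal :=
  sInf (shrinkSeq c B t t.unpair.1)

theorem shrinkSeq_antitone {t t' : ℕ} (h : t ≤ t') (s : ℕ) :
    shrinkSeq c B t' s ⊆ shrinkSeq c B t s := by
  induction h with
  | refl => exact subset_rfl
  | step _ ih => exact (colorNbrs_subset _ _ _ _).trans ih

theorem shrinkSeq_nonempty {P : Set Ordinal → Prop} (hB : ∀ s, P (B s))
    (hP : ∀ S T, P S → P T → P (colorNbrs c true (sInf T) S)) (hne : ∀ S, P S → S.Nonempty)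
    (t s : ℕ) : (shrinkSeq c B t s).Nonempty := by
  refine hne _ ?_
  induction t generalizing s with
  | zero => exact hB s
  | succ t ih => exact hP _ _ (ih s) (ih _)

variable {c B} (hne : ∀ t s, (shrinkSeq c B t s).Nonempty)
include hne

theorem dovetailPt_mem (t : ℕ) : dovetailPt c B t ∈ shrinkSeq c B t t.unpair.1 :=
  csInf_mem (hne t _)

theorem dovetailPt_mem_colorNbrs {t t' : ℕ} (h : t < t') :
    dovetailPt c B t' ∈ colorNbrs c true (dovetailPt c B t) (shrinkSeq c B t t'.unpair.1) :=
  shrinkSeq_antitone c B h _ (dovetailPt_mem hne t')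

theorem dovetailPt_mem_init (t : ℕ) : dovetailPt c B t ∈ B t.unpair.1 :=
  shrinkSeq_antitone c B t.zero_le _ (dovetailPt_mem hne t)

theorem homog_range_dovetailPt : Homog c true (range (dovetailPt c B)) := by
  rintro _ ⟨t, rfl⟩ _ ⟨t', rfl⟩ hlt
  rcases lt_trichotomy t t' with h | rfl | h
  · simpa [min_eq_left hlt.le, max_eq_right hlt.le] using (dovetailPt_mem_colorNbrs hne h).2.2
  · exact absurd hlt (lt_irrefl _)
  · simpa [min_eq_right hlt.le, max_eq_left hlt.le] using (dovetailPt_mem_colorNbrs hne h).2.2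

/-- The points picked for one index increase, since each is the least point of a set containing
all later ones. -/
theorem strictMono_dovetailPt_pair (s : ℕ) :
    StrictMono fun n => dovetailPt c B (Nat.pair s n) := by
  refine strictMono_nat_of_lt_succ fun n => ?_
  have h := dovetailPt_mem_colorNbrs hne (Nat.pair_lt_pair_right s n.lt_succ_self)
  rw [Nat.unpair_pair] at h
  refine lt_of_le_of_ne (csInf_le' ?_) (Ne.symm h.2.1)
  simpa only [Nat.unpair_pair] using h.1

end Dovetail

theorem countable_Iio_omega0_opow {a : Ordinal} (ha : a.card ≤ Cardinal.aleph0) :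
    (Iio (ω ^ a)).Countable := by
  rw [← countable_coe_iff, ← Cardinal.mk_le_aleph0_iff, Cardinal.mk_Iio_ordinal,
    Cardinal.lift_le_aleph0]
  exact (card_opow_le ω a).trans (by simp [ha])

theorem toPlain2_one {β : Ordinal} (hβ : β ≠ 0) (τ : Ordinal) : ToPlain2 β τ 1 := fun _ =>
  Or.inr ⟨{0}, by simpa using pos_iff_ne_zero.2 hβ, Finset.card_singleton 0, by
    rw [Finset.coe_singleton]
    rintro x rfl y rfl hxy
    exact absurd hxy (lt_irrefl _)⟩

theorem ToPlain2.omega0_opow_mul {A δ : Ordinal} {m : ℕ} (h : ToPlain2 (ω ^ A) (ω * δ) m)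
    (hA : A ≠ 0) (hδ : δ ≠ 0) (hδc : (Iio δ).Countable) :
    ToPlain2 (ω ^ A * δ) (ω * δ) (m + 1) := by
  intro c
  by_contra hU
  change ¬ Arrows c (Iio (ω ^ A * δ)) (ω * δ) (m + 1) at hU
  have hωA : ω ^ A ≠ 0 := opow_ne_zero A omega0_ne_zero
  obtain ⟨E, hE⟩ := hδc.exists_eq_range ⟨0, pos_iff_ne_zero.2 hδ⟩
  set B : ℕ → Set Ordinal := fun s => Ico (ω ^ A * E s) (ω ^ A * E s + ω ^ A)
  let P : Set Ordinal → Prop := fun S => S ⊆ Iio (ω ^ A * δ) ∧ ContainsCopy S (ω ^ A)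
  have hB (s : ℕ) : P (B s) :=
    ⟨fun _ hy => lt_of_mem_Ico_mul (hE.superset (mem_range_self s)) hy le_rfl,
      containsCopy_Ico _ _⟩
  have hP (S T : Set Ordinal) (hS : P S) (hT : P T) : P (colorNbrs c true (sInf T) S) :=
    ⟨(colorNbrs_subset _ _ _ _).trans hS.1, containsCopy_colorNbrs_true hA h hU
      (hT.1 (csInf_mem (hT.2.nonempty hωA))) hS.1 hS.2⟩
  have hne := shrinkSeq_nonempty c B hB hP fun _ hS => hS.2.nonempty hωA
  obtain ⟨X, hX, hXc⟩ := (containsCopy_omega0_mul hE.symm (strictMono_dovetailPt_pair hne)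
    (dovetailPt_mem_init hne)).exists_isOrderCopy
  exact hU (Or.inl ⟨X, hX.trans inter_subset_right, hXc,
    (homog_range_dovetailPt hne).mono (hX.trans inter_subset_left)⟩)

theorem stmt14_general (a : Ordinal) (hac : a.card ≤ Cardinal.aleph0)
    (k : ℕ) :
    ToPlain2 ((ω : Ordinal) ^ (1 + a * k)) ((ω : Ordinal) ^ (1 + a)) (k + 1) := by
  have hτ : (ω : Ordinal) ^ (1 + a) = ω * ω ^ a := by rw [opow_add, opow_one]
  induction k with
  | zero => simpa using toPlain2_one omega0_ne_zero _
  | succ k ih =>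
    have hγ : (ω : Ordinal) ^ (1 + a * (k + 1 : ℕ)) = ω ^ (1 + a * k) * ω ^ a := by
      rw [Nat.cast_succ, mul_add_one, ← add_assoc, opow_add]
    rw [hγ, hτ]
    rw [hτ] at ih
    exact ih.omega0_opow_mul (one_pos.trans_le le_self_add).ne'
      (opow_ne_zero a omega0_ne_zero) (countable_Iio_omega0_opow hac)

/-- for countable `α ≥ 1` and finite `k ≥ 1`,
`ω^(1+α·k) → (ω^(1+α), k+1)²`, i.e. `R(ω^(1+α), k+1) ≤ ω^(1+α·k)`. -/
theorem stmt14 (a : Ordinal) (ha1 : 1 ≤ a) (hac : a.card ≤ Cardinal.aleph0)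
    (k : ℕ) (hk : 0 < k) :
    ToPlain2 ((ω : Ordinal) ^ (1 + a * k)) ((ω : Ordinal) ^ (1 + a)) (k + 1) :=
  stmt14_general a hac k

end
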